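/- arXiv:1309.1849 — 3 statements merged into one kernel-verified Lean document; each statement's English description precedes it below -/
import Mathlib

section
/- Under the hypotheses of the previous item, if one edge direction of the closed reflective polygon A₁ … A_k lies in span(1,i), then the edge directions alternate between span(1,i) and span(1,−i) around the polygon; consequently k must be even. -/
/-!
Reflection in a non-isotropic line swaps the two isotropic lines `span(1,i)` and `span(1,-i)`
of the form `B`, so consecutive edges of a reflective polygon lie in opposite isotropic lines
as soon as one of them is isotropic. The edges are nonzero and the two lines meet only in `0`,
so going once around the polygon alternates between them an even number of times.
-/

open Complex

/-- The complex-bilinear (non-Hermitian) form on ℂ². -/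
noncomputable def Bform (z w : ℂ × ℂ) : ℂ := z.1 * w.1 + z.2 * w.2

/-- The reflection fixing the line spanned by `v` (for `Bform v v ≠ 0`). -/
noncomputable def reflB (v x : ℂ × ℂ) : ℂ × ℂ := (2 * Bform x v / Bform v v) • v - x

open Submodule

lemma mem_span_one_pair_iff {R : Type*} [CommSemiring R] (w : R) (x : R × R) :
    x ∈ span R {((1 : R), w)} ↔ x.2 = w * x.1 := by
  rw [mem_span_singleton]
  constructor
  · rintro ⟨c, rfl⟩
    simp [mul_comm]
  · intro h
    exact ⟨x.1, Prod.ext (mul_one _) (by simp [h, mul_comm])⟩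

lemma eq_zero_of_mem_span_one_pair_of_mem_span_one_pair_neg {K : Type*} [Field K]
    [NeZero (2 : K)] {s : K} (hs : s ≠ 0) {x : K × K} (hx : x ∈ span K {((1 : K), s)})
    (hx' : x ∈ span K {((1 : K), -s)}) : x = 0 := by
  rw [mem_span_one_pair_iff] at hx hx'
  have hx₁ : x.1 = 0 := by
    have : (2 * s) * x.1 = 0 := by linear_combination hx' - hx
    exact (mul_eq_zero_iff_left (mul_ne_zero two_ne_zero hs)).1 this
  exact Prod.ext hx₁ (by simp [hx, hx₁])

lemma reflB_mem_span_one_pair_neg_iff {s : ℂ} (hs : s * s = -1) {v : ℂ × ℂ}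
    (hv : Bform v v ≠ 0) (x : ℂ × ℂ) :
    reflB v x ∈ span ℂ {((1 : ℂ), -s)} ↔ x ∈ span ℂ {((1 : ℂ), s)} := by
  simp only [mem_span_one_pair_iff]
  -- `B(v,v)` factors as `(v.2 + s v.1)(v.2 - s v.1)`.
  have hvs : v.2 + s * v.1 ≠ 0 := fun h ↦ hv <| by
    unfold Bform
    linear_combination (v.2 - s * v.1) * h + v.1 * v.1 * hs
  -- The reflection carries the linear form cutting out `span(1,s)` to a nonzero multiple of
  -- the one cutting out `span(1,-s)`.
  have key : ((reflB v x).2 + s * (reflB v x).1) * Bform v v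
      = (x.2 - s * x.1) * (v.2 + s * v.1) ^ 2 := by
    have hquot : 2 * Bform x v / Bform v v * Bform v v = 2 * Bform x v := div_mul_cancel₀ _ hv
    simp only [reflB, Bform, Prod.snd_sub, Prod.fst_sub, Prod.smul_snd, Prod.smul_fst,
      smul_eq_mul] at hquot ⊢
    linear_combination (v.2 + s * v.1) * hquot
      + (-(v.1 ^ 2 * x.2) + 2 * v.1 * v.2 * x.1 + s * v.1 ^ 2 * x.1) * hs
  rw [neg_mul, eq_neg_iff_add_eq_zero, ← sub_eq_zero (a := x.2),
    ← mul_eq_zero_iff_right hv, key, mul_eq_zero_iff_right (pow_ne_zero 2 hvs)]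

lemma mem_span_one_pair_iff_of_reflB_eq_smul {s : ℂ} (hs : s * s = -1) {v x y : ℂ × ℂ}
    {c : ℂ} (hv : Bform v v ≠ 0) (hc : c ≠ 0) (h : reflB v x = c • y) :
    x ∈ span ℂ {((1 : ℂ), s)} ↔ y ∈ span ℂ {((1 : ℂ), -s)} := by
  rw [← reflB_mem_span_one_pair_neg_iff hs hv, h, smul_mem_iff _ hc]

lemma ZMod.even_of_alternating {k : ℕ} {P Q : ZMod k → Prop} (hPQ : ∀ j, P j → Q (j + 1))
    (hQP : ∀ j, Q j → P (j + 1)) (hdisj : ∀ j, P j → ¬Q j) {j₀ : ZMod k} (h₀ : P j₀) :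
    Even k := by
  have walk : ∀ n : ℕ, (Even n → P (j₀ + n)) ∧ (Odd n → Q (j₀ + n)) := by
    intro n
    induction n with
    | zero => simpa using h₀
    | succ n ih =>
      push_cast
      rw [← add_assoc]
      exact ⟨fun he ↦ hQP _ (ih.2 (Nat.even_add_one.1 he |> Nat.not_even_iff_odd.1)),
        fun ho ↦ hPQ _ (ih.1 (Nat.odd_add_one.1 ho |> Nat.not_odd_iff_even.1))⟩
  by_contra hodd
  have hQ₀ := (walk k).2 (Nat.not_even_iff_odd.1 hodd)
  rw [ZMod.natCast_self, add_zero] at hQ₀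
  exact hdisj j₀ h₀ hQ₀

theorem edges_alternate_and_even_general (k : ℕ) (A : ZMod k → ℂ × ℂ)
    (hrefl : ∀ j : ZMod k, ∃ v : ℂ × ℂ, v ≠ 0 ∧ Bform v v ≠ 0 ∧
      ∃ c : ℂ, c ≠ 0 ∧ reflB v (A j - A (j - 1)) = c • (A (j + 1) - A j))
    (hdist : ∀ j : ZMod k, A j ≠ A (j + 1))
    (j₀ : ZMod k) (hiso : A (j₀ + 1) - A j₀ ∈ Submodule.span ℂ {((1 : ℂ), I)}) :
    (∀ j : ZMod k,
        (A (j + 1) - A j ∈ Submodule.span ℂ {((1 : ℂ), I)} ↔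
          A (j + 2) - A (j + 1) ∈ Submodule.span ℂ {((1 : ℂ), -I)})) ∧
      Even k := by
  have step : ∀ s : ℂ, s * s = -1 → ∀ j : ZMod k,
      (A (j + 1) - A j ∈ span ℂ {((1 : ℂ), s)} ↔
        A (j + 1 + 1) - A (j + 1) ∈ span ℂ {((1 : ℂ), -s)}) := by
    intro s hs j
    obtain ⟨v, -, hv, c, hc, h⟩ := hrefl (j + 1)
    rw [add_sub_cancel_right] at h
    exact mem_span_one_pair_iff_of_reflB_eq_smul hs hv hc h
  have two_eq : ∀ j : ZMod k, j + 2 = j + 1 + 1 := fun j ↦ by ring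
  refine ⟨fun j ↦ two_eq j ▸ step I I_mul_I j, ZMod.even_of_alternating
    (P := fun j ↦ A (j + 1) - A j ∈ span ℂ {((1 : ℂ), I)})
    (Q := fun j ↦ A (j + 1) - A j ∈ span ℂ {((1 : ℂ), -I)})
    (fun j ↦ (step I I_mul_I j).1) (fun j h ↦ ?_) (fun j hP hQ ↦ ?_) hiso⟩
  · simpa using (step (-I) (by simp) j).1 h
  · exact sub_ne_zero.2 (hdist j).symm
      (eq_zero_of_mem_span_one_pair_of_mem_span_one_pair_neg I_ne_zero hP hQ)

/-- In a closed reflective polygon in ℂ², if one edge direction lies in `span(1,i)`, then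
the edge directions alternate between `span(1,i)` and `span(1,-i)`; consequently `k` is even. -/
theorem edges_alternate_and_even (k : ℕ) (hk : 2 ≤ k) (A : ZMod k → ℂ × ℂ)
    (hrefl : ∀ j : ZMod k, ∃ v : ℂ × ℂ, v ≠ 0 ∧ Bform v v ≠ 0 ∧
      ∃ c : ℂ, c ≠ 0 ∧ reflB v (A j - A (j - 1)) = c • (A (j + 1) - A j))
    (hdist : ∀ j : ZMod k, A j ≠ A (j + 1))
    (j₀ : ZMod k) (hiso : A (j₀ + 1) - A j₀ ∈ Submodule.span ℂ {((1 : ℂ), I)}) :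
    (∀ j : ZMod k,
        (A (j + 1) - A j ∈ Submodule.span ℂ {((1 : ℂ), I)} ↔
          A (j + 2) - A (j + 1) ∈ Submodule.span ℂ {((1 : ℂ), -I)})) ∧
      Even k :=
  edges_alternate_and_even_general k A hrefl hdist j₀ hiso
end

section
/- A closed polygon in ℂ² with an odd number k of vertices, all consecutive vertices distinct, whose edges obey the complex reflection law at every vertex (reflection in some non-isotropic line), cannot have any isotropic edge direction. -/
open Complex

/-
An isotropic edge direction is `ℂ ∙ (1, ε)` with `ε² = -1`, and every non-isotropic reflection
maps `ℂ ∙ (1, ε)` onto `ℂ ∙ (1, -ε)`. Going once around the polygon, the direction of an isotropic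
edge is therefore reflected `k` times, an odd number, so the edge lies on both isotropic lines.
These meet only in `0`, contradicting that consecutive vertices are distinct.
-/

theorem mem_span_one_iff (ε : ℂ) (x : ℂ × ℂ) :
    x ∈ ℂ ∙ ((1 : ℂ), ε) ↔ x.2 = ε * x.1 := by
  rw [Submodule.mem_span_singleton]
  constructor
  · rintro ⟨a, rfl⟩
    simp [mul_comm]
  · intro h
    exact ⟨x.1, Prod.ext (by simp) (by simp [h, mul_comm])⟩

theorem eq_zero_of_mem_span_one_of_mem_span_neg {ε : ℂ} (hε : ε ≠ 0) {x : ℂ × ℂ}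
    (hpos : x ∈ ℂ ∙ ((1 : ℂ), ε)) (hneg : x ∈ ℂ ∙ ((1 : ℂ), -ε)) : x = 0 := by
  rw [mem_span_one_iff] at hpos hneg
  have hx₁ : x.1 = 0 := by
    have : (2 * ε) * x.1 = 0 := by linear_combination hneg - hpos
    simpa [hε] using this
  exact Prod.ext hx₁ (by simp [hpos, hx₁])

theorem reflB_mem_span_neg {ε : ℂ} (hε : ε ^ 2 = -1) {v : ℂ × ℂ} (hv : Bform v v ≠ 0)
    {x : ℂ × ℂ} (hx : x ∈ ℂ ∙ ((1 : ℂ), ε)) : reflB v x ∈ ℂ ∙ ((1 : ℂ), -ε) := by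
  rw [mem_span_one_iff] at hx ⊢
  obtain ⟨a, b⟩ := x
  obtain ⟨v₁, v₂⟩ := v
  simp only at hx
  subst hx
  have hv' : v₁ ^ 2 + v₂ ^ 2 ≠ 0 := by simpa [Bform, ← sq] using hv
  simp only [reflB, Bform, Prod.smul_mk, smul_eq_mul, Prod.mk_sub_mk]
  field_simp
  -- `(v₁ + ε v₂)(v₂ + ε v₁) = ε (v₁² + v₂²)` because `ε² = -1`
  linear_combination (2 * a * v₁ * v₂) * hε

theorem mem_span_neg_of_reflB_eq_smul {ε : ℂ} (hε : ε ^ 2 = -1) {v x y : ℂ × ℂ} {c : ℂ}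
    (hv : Bform v v ≠ 0) (hc : c ≠ 0) (hxy : reflB v x = c • y)
    (hx : x ∈ ℂ ∙ ((1 : ℂ), ε)) : y ∈ ℂ ∙ ((1 : ℂ), -ε) := by
  have hy : y = c⁻¹ • reflB v x := by rw [hxy, inv_smul_smul₀ hc]
  exact hy ▸ Submodule.smul_mem _ _ (reflB_mem_span_neg hε hv hx)

theorem edge_mem_span_neg_one_pow {k : ℕ} {e : ZMod k → ℂ × ℂ}
    (hstep : ∀ (j : ZMod k) (ε : ℂ), ε ^ 2 = -1 → e j ∈ ℂ ∙ ((1 : ℂ), ε) →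
      e (j + 1) ∈ ℂ ∙ ((1 : ℂ), -ε))
    (n : ℕ) {j : ZMod k} {ε : ℂ} (hε : ε ^ 2 = -1) (hj : e j ∈ ℂ ∙ ((1 : ℂ), ε)) :
    e (j + n) ∈ ℂ ∙ ((1 : ℂ), (-1) ^ n * ε) := by
  induction n generalizing j ε with
  | zero => simpa using hj
  | succ n ih =>
    have := ih (by rwa [neg_sq]) (hstep j ε hε hj)
    rw [Nat.cast_succ, add_comm (n : ZMod k), ← add_assoc, pow_succ]
    simpa [mul_comm] using this

theorem odd_polygon_no_isotropic_edge_general (k : ℕ) (hodd : Odd k)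
    (A : ZMod k → ℂ × ℂ)
    (hrefl : ∀ j : ZMod k, ∃ v : ℂ × ℂ, v ≠ 0 ∧ Bform v v ≠ 0 ∧
      ∃ c : ℂ, c ≠ 0 ∧ reflB v (A j - A (j - 1)) = c • (A (j + 1) - A j))
    (hdist : ∀ j : ZMod k, A j ≠ A (j + 1)) :
    ¬ ∃ j : ZMod k, A (j + 1) - A j ∈ Submodule.span ℂ {((1 : ℂ), I)} ∨
      A (j + 1) - A j ∈ Submodule.span ℂ {((1 : ℂ), -I)} := by
  rintro ⟨j, hj⟩
  obtain ⟨ε, hε, hmem⟩ : ∃ ε : ℂ, ε ^ 2 = -1 ∧ A (j + 1) - A j ∈ ℂ ∙ ((1 : ℂ), ε) := by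
    rcases hj with h | h
    exacts [⟨I, I_sq, h⟩, ⟨-I, by rw [neg_sq, I_sq], h⟩]
  have hstep : ∀ (i : ZMod k) (δ : ℂ), δ ^ 2 = -1 → A (i + 1) - A i ∈ ℂ ∙ ((1 : ℂ), δ) →
      A (i + 1 + 1) - A (i + 1) ∈ ℂ ∙ ((1 : ℂ), -δ) := by
    intro i δ hδ hi
    obtain ⟨v, -, hv, c, hc, hr⟩ := hrefl (i + 1)
    rw [add_sub_cancel_right] at hr
    exact mem_span_neg_of_reflB_eq_smul hδ hv hc hr hi
  have hround := edge_mem_span_neg_one_pow (e := fun i => A (i + 1) - A i) hstep k hε hmem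
  simp only [ZMod.natCast_self, add_zero, hodd.neg_one_pow, neg_one_mul] at hround
  have hε₀ : ε ≠ 0 := by rintro rfl; norm_num at hε
  exact hdist j (sub_eq_zero.mp (eq_zero_of_mem_span_one_of_mem_span_neg hε₀ hmem hround)).symm

/-- A closed reflective polygon in ℂ² with an odd number of vertices cannot have any
isotropic edge direction. -/
theorem odd_polygon_no_isotropic_edge (k : ℕ) (hk : 2 ≤ k) (hodd : Odd k)
    (A : ZMod k → ℂ × ℂ)
    (hrefl : ∀ j : ZMod k, ∃ v : ℂ × ℂ, v ≠ 0 ∧ Bform v v ≠ 0 ∧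
      ∃ c : ℂ, c ≠ 0 ∧ reflB v (A j - A (j - 1)) = c • (A (j + 1) - A j))
    (hdist : ∀ j : ZMod k, A j ≠ A (j + 1)) :
    ¬ ∃ j : ZMod k, A (j + 1) - A j ∈ Submodule.span ℂ {((1 : ℂ), I)} ∨
      A (j + 1) - A j ∈ Submodule.span ℂ {((1 : ℂ), -I)} :=
  odd_polygon_no_isotropic_edge_general k hodd A hrefl hdist
end

section
/- Suppose (L₁, L₂) is a limit of pairs of lines through a fixed point x ∈ ℂ² symmetric with respect to non-isotropic lines ℓ_n through x, where ℓ_n converges to an isotropic line L through x. Then L₁ = L or L₂ = L. Formally: let v_n → v₀ in ℂ²∖{0} with B(v_n, v_n) ≠ 0 and B(v₀, v₀) = 0, let u_n, w_n be unit-normalized nonzero vectors with σ_{v_n}(u_n) ∈ span(w_n), and suppose span(u_n) → span(u), span(w_n) → span(w) in ℙ¹(ℂ). Then span(u) = span(v₀) or span(w) = span(v₀). -/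
open Complex Filter

open Topology

/-!
If `B(u, v₀) = 0`, then `u` is proportional to `v₀`, since an isotropic line of ℂ² is its own
`B`-orthogonal. Otherwise, with `uₙ' = cₙ uₙ → u`, rescaling the reflection by
`γₙ = B(vₙ, vₙ) / (2 B(uₙ', vₙ))` shows that `vₙ - γₙ uₙ'` lies on the line `span wₙ`.
Since `B(vₙ, vₙ) → B(v₀, v₀) = 0` while `B(uₙ', vₙ) → B(u, v₀) ≠ 0`, we get `γₙ → 0`, so these
points tend to `v₀`. Their determinant with `wₙ' = dₙ wₙ → w` vanishes, and in the limit
`det(w, v₀) = 0`, i.e. `span w = span v₀`.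
-/

section Wedge

variable {K : Type*}

def wedge [CommRing K] (x y : K × K) : K := x.1 * y.2 - x.2 * y.1

theorem wedge_comm [CommRing K] (x y : K × K) : wedge x y = -wedge y x := by
  unfold wedge; ring

theorem wedge_smul_left [CommRing K] (c : K) (x y : K × K) :
    wedge (c • x) y = c * wedge x y := by
  simp only [wedge, Prod.smul_fst, Prod.smul_snd, smul_eq_mul]; ring

theorem wedge_eq_zero_of_mem_span [CommRing K] {x y : K × K} (h : y ∈ Submodule.span K {x}) :
    wedge x y = 0 := by
  obtain ⟨a, rfl⟩ := Submodule.mem_span_singleton.mp h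
  simp only [wedge, Prod.smul_fst, Prod.smul_snd, smul_eq_mul]; ring

theorem mem_span_of_wedge_eq_zero [Field K] {x y : K × K} (hx : x ≠ 0) (h : wedge x y = 0) :
    y ∈ Submodule.span K {x} := by
  rw [Submodule.mem_span_singleton]
  unfold wedge at h
  rcases eq_or_ne x.1 0 with hx₁ | hx₁
  · have hx₂ : x.2 ≠ 0 := fun hx₂ => hx (Prod.ext hx₁ hx₂)
    have hy₁ : y.1 = 0 := by simpa [hx₁, hx₂] using h
    refine ⟨y.2 / x.2, Prod.ext ?_ ?_⟩
    · simp [hx₁, hy₁]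
    · simp [hx₂]
  · refine ⟨y.1 / x.1, Prod.ext ?_ ?_⟩
    · simp [hx₁]
    · simp only [Prod.smul_snd, smul_eq_mul]
      field_simp
      linear_combination -h

theorem span_singleton_eq_of_wedge_eq_zero [Field K] {x y : K × K} (hx : x ≠ 0) (hy : y ≠ 0)
    (h : wedge x y = 0) : Submodule.span K {x} = Submodule.span K {y} := by
  apply le_antisymm <;> rw [Submodule.span_singleton_le_iff_mem]
  · exact mem_span_of_wedge_eq_zero hy (by rw [wedge_comm, h, neg_zero])
  · exact mem_span_of_wedge_eq_zero hx h

theorem wedge_eq_zero_of_tendsto [CommRing K] [TopologicalSpace K] [IsTopologicalRing K]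
    [T2Space K] {ι : Type*} {l : Filter ι} [l.NeBot] {x y : ι → K × K} {a b : K × K}
    (hx : Tendsto x l (𝓝 a)) (hy : Tendsto y l (𝓝 b)) (h : ∀ᶠ i in l, wedge (x i) (y i) = 0) :
    wedge a b = 0 := by
  have hlim : Tendsto (fun i => wedge (x i) (y i)) l (𝓝 (wedge a b)) :=
    (hx.fst_nhds.mul hy.snd_nhds).sub (hx.snd_nhds.mul hy.fst_nhds)
  exact tendsto_nhds_unique hlim (tendsto_const_nhds.congr' (h.mono fun _ hi => hi.symm))

end Wedge

theorem Filter.Tendsto.bform {ι : Type*} {l : Filter ι} {x y : ι → ℂ × ℂ} {a b : ℂ × ℂ}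
    (hx : Tendsto x l (𝓝 a)) (hy : Tendsto y l (𝓝 b)) :
    Tendsto (fun i => Bform (x i) (y i)) l (𝓝 (Bform a b)) :=
  (hx.fst_nhds.mul hy.fst_nhds).add (hx.snd_nhds.mul hy.snd_nhds)

theorem wedge_eq_zero_of_bform_eq_zero {u v : ℂ × ℂ} (hv : v ≠ 0) (hvv : Bform v v = 0)
    (huv : Bform u v = 0) : wedge u v = 0 := by
  unfold Bform at hvv huv
  rcases ne_or_eq v.1 0 with hv₁ | hv₁
  · have key : wedge u v * v.1 = 0 := by
      unfold wedge; linear_combination v.2 * huv - u.2 * hvv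
    exact (mul_eq_zero.mp key).resolve_right hv₁
  · have hv₂ : v.2 ≠ 0 := fun hv₂ => hv (Prod.ext hv₁ hv₂)
    have key : wedge u v * v.2 = 0 := by
      unfold wedge; linear_combination -v.1 * huv + u.1 * hvv
    exact (mul_eq_zero.mp key).resolve_right hv₂

theorem reflB_smul (v x : ℂ × ℂ) (c : ℂ) : reflB v (c • x) = c • reflB v x := by
  simp only [reflB, Bform, Prod.smul_fst, Prod.smul_snd, smul_eq_mul, smul_sub, smul_smul]
  congr 2; ring

theorem smul_reflB {v x : ℂ × ℂ} (hv : Bform v v ≠ 0) (hx : Bform x v ≠ 0) :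
    (Bform v v / (2 * Bform x v)) • reflB v x = v - (Bform v v / (2 * Bform x v)) • x := by
  rw [reflB, smul_sub, smul_smul]
  congr 1
  rw [show Bform v v / (2 * Bform x v) * (2 * Bform x v / Bform v v) = 1 by field_simp, one_smul]

theorem limit_reflection_isotropic_general
    (v : ℕ → ℂ × ℂ) (v₀ u w : ℂ × ℂ) (un wn : ℕ → ℂ × ℂ)
    (hv : Tendsto v atTop (nhds v₀)) (hv₀ : v₀ ≠ 0)
    (hvn : ∀ n, Bform (v n) (v n) ≠ 0) (hiso : Bform v₀ v₀ = 0)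
    (hsym : ∀ n, reflB (v n) (un n) ∈ Submodule.span ℂ {wn n})
    (hu : u ≠ 0) (hw : w ≠ 0)
    (hconvu : ∃ c : ℕ → ℂ, Tendsto (fun n => c n • un n) atTop (nhds u))
    (hconvw : ∃ c : ℕ → ℂ, Tendsto (fun n => c n • wn n) atTop (nhds w)) :
    Submodule.span ℂ {u} = Submodule.span ℂ {v₀} ∨
      Submodule.span ℂ {w} = Submodule.span ℂ {v₀} := by
  rcases eq_or_ne (Bform u v₀) 0 with huv | huv
  · exact .inl (span_singleton_eq_of_wedge_eq_zero hu hv₀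
      (wedge_eq_zero_of_bform_eq_zero hv₀ hiso huv))
  obtain ⟨c, hc⟩ := hconvu
  obtain ⟨d, hd⟩ := hconvw
  have hB := hc.bform hv
  set γ : ℕ → ℂ := fun n => Bform (v n) (v n) / (2 * Bform (c n • un n) (v n))
  have hγ : Tendsto γ atTop (𝓝 0) := by
    have := (hv.bform hv).div (hB.const_mul 2) (mul_ne_zero two_ne_zero huv)
    rwa [hiso, zero_div] at this
  have hx : Tendsto (fun n => v n - γ n • c n • un n) atTop (𝓝 v₀) := by
    simpa using hv.sub (hγ.smul hc)
  have hmem : ∀ᶠ n in atTop, v n - γ n • c n • un n ∈ Submodule.span ℂ {wn n} := by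
    filter_upwards [hB.eventually_ne huv] with n hn
    rw [← smul_reflB (hvn n) hn, reflB_smul]
    exact Submodule.smul_mem _ _ (Submodule.smul_mem _ _ (hsym n))
  refine .inr (span_singleton_eq_of_wedge_eq_zero hw hv₀ (wedge_eq_zero_of_tendsto hd hx ?_))
  filter_upwards [hmem] with n hn
  rw [wedge_smul_left, wedge_eq_zero_of_mem_span hn, mul_zero]

/-- Degenerate reflection law at isotropic lines: if pairs of lines `(span uₙ, span wₙ)`
through a point are symmetric with respect to non-isotropic lines `span vₙ`, where
`vₙ → v₀` with `v₀` isotropic, and the lines `span uₙ`, `span wₙ` converge to the lines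
spanned by `u`, `w` (convergence of lines being expressed via converging rescaled
representatives), then the limit pair contains the limit line: `span u = span v₀` or
`span w = span v₀`. -/
theorem limit_reflection_isotropic
    (v : ℕ → ℂ × ℂ) (v₀ u w : ℂ × ℂ) (un wn : ℕ → ℂ × ℂ)
    (hv : Tendsto v atTop (nhds v₀)) (hv₀ : v₀ ≠ 0)
    (hvn : ∀ n, Bform (v n) (v n) ≠ 0) (hiso : Bform v₀ v₀ = 0)
    (hun : ∀ n, ‖un n‖ = 1) (hwn : ∀ n, ‖wn n‖ = 1)
    (hsym : ∀ n, reflB (v n) (un n) ∈ Submodule.span ℂ {wn n})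
    (hu : u ≠ 0) (hw : w ≠ 0)
    (hconvu : ∃ c : ℕ → ℂ, Tendsto (fun n => c n • un n) atTop (nhds u))
    (hconvw : ∃ c : ℕ → ℂ, Tendsto (fun n => c n • wn n) atTop (nhds w)) :
    Submodule.span ℂ {u} = Submodule.span ℂ {v₀} ∨
      Submodule.span ℂ {w} = Submodule.span ℂ {v₀} :=
  limit_reflection_isotropic_general v v₀ u w un wn hv hv₀ hvn hiso hsym hu hw hconvu hconvw
end
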